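/- There exist a finite LPTS L and a finite reactive LPTS R with L ⋠ R such that no reactive LPTS is a counterexample, i.e. every reactive C with C ≼ L also satisfies C ≼ R. -/

import Mathlib

open Classical

structure FDist (S : Type) [Fintype S] where
  pmf : S → ℝ
  nonneg : ∀ s, 0 ≤ pmf s
  sum_one : ∑ s, pmf s = 1

namespace FDist

variable {S S1 S2 : Type} [Fintype S] [Fintype S1] [Fintype S2]

noncomputable def prob (μ : FDist S) (T : Set S) : ℝ :=
  ∑ s, if s ∈ T then μ.pmf s else 0

def supp (μ : FDist S) : Set S := {s | 0 < μ.pmf s}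

noncomputable def dirac (s : S) : FDist S where
  pmf t := if t = s then 1 else 0
  nonneg t := by (try dsimp only); split <;> norm_num
  sum_one := by simp

noncomputable def prod (μ1 : FDist S1) (μ2 : FDist S2) : FDist (S1 × S2) where
  pmf p := μ1.pmf p.1 * μ2.pmf p.2
  nonneg p := mul_nonneg (μ1.nonneg _) (μ2.nonneg _)
  sum_one := by
    rw [Fintype.sum_prod_type]
    simp_rw [← Finset.mul_sum, μ2.sum_one, mul_one]
    exact μ1.sum_one

end FDist

/-- Image of a set under a relation: `R(T) = {s2 | ∃ s1 ∈ T, (s1,s2) ∈ R}`. -/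
def relImage {S1 S2 : Type} (R : Set (S1 × S2)) (T : Set S1) : Set S2 :=
  {s2 | ∃ s1 ∈ T, (s1, s2) ∈ R}

/-- The lifting `μ1 ⊑_R μ2` of a relation on states to distributions,
via the Hall-type subset condition. -/
def liftRel {S1 S2 : Type} [Fintype S1] [Fintype S2]
    (R : Set (S1 × S2)) (μ1 : FDist S1) (μ2 : FDist S2) : Prop :=
  ∀ T ⊆ μ1.supp, μ1.prob T ≤ μ2.prob (relImage R T)

/-- A (finite, finitely-branching) labeled probabilistic transition system. -/
structure LPTS (S : Type) (Act : Type) [Fintype S] where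
  start : S
  alpha : Set Act
  trans : S → Act → Set (FDist S)
  trans_mem : ∀ s a μ, μ ∈ trans s a → a ∈ alpha
  finite_trans : ∀ s a, (trans s a).Finite

/-- `R` is a strong simulation between `L1` and `L2`. -/
def StrongSim {S1 S2 Act : Type} [Fintype S1] [Fintype S2]
    (L1 : LPTS S1 Act) (L2 : LPTS S2 Act) (R : Set (S1 × S2)) : Prop :=
  ∀ s1 s2, (s1, s2) ∈ R → ∀ a μ1, μ1 ∈ L1.trans s1 a →
    ∃ μ2 ∈ L2.trans s2 a, liftRel R μ1 μ2

/-- `L2` strongly simulates `L1` (written `L1 ≼ L2`). -/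
def Sim {S1 S2 Act : Type} [Fintype S1] [Fintype S2]
    (L1 : LPTS S1 Act) (L2 : LPTS S2 Act) : Prop :=
  ∃ R, StrongSim L1 L2 R ∧ (L1.start, L2.start) ∈ R

/-- Reactive: at most one transition per state and action. -/
def Reactive {S Act : Type} [Fintype S] (L : LPTS S Act) : Prop :=
  ∀ s a, (L.trans s a).Subsingleton

/-- Fully probabilistic: at most one transition per state. -/
def FullyProbabilistic {S Act : Type} [Fintype S] (L : LPTS S Act) : Prop :=
  ∀ s, {p : Act × FDist S | p.2 ∈ L.trans s p.1}.Subsingleton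


/-!
In `Lsys` the state reached with probability `1/2` by `x` chooses, on `y`, between a `z`-state and
a `w`-state, while `Rsys` resolves this choice beforehand, with probability `1/2` each way; hence
`Lsys ⋠ Rsys`. A reactive `C` cannot exploit the choice: each of its states simulated by the
choosing state commits to `z` or to `w` and is simulated by the matching state of `Rsys`, and the
states simulated by the leaf are deadlocked, hence simulated by anything. The lifting to the
`x`-step of `Lsys` puts at most half of the mass on committed states, so they fit into either half
of the `x`-step of `Rsys`.
-/

namespace FDist

variable {S : Type} [Fintype S]

lemma prob_nonneg (μ : FDist S) (T : Set S) : 0 ≤ μ.prob T :=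
  Finset.sum_nonneg fun s _ => by split_ifs <;> simp [μ.nonneg s]

lemma prob_le_one (μ : FDist S) (T : Set S) : μ.prob T ≤ 1 :=
  μ.sum_one ▸ Finset.sum_le_sum fun s _ => by split_ifs <;> simp [μ.nonneg s]

@[simp]
lemma prob_empty (μ : FDist S) : μ.prob ∅ = 0 := by
  simp [prob]

@[simp]
lemma prob_singleton (μ : FDist S) (s : S) : μ.prob {s} = μ.pmf s := by
  simp [prob]

@[simp]
lemma prob_dirac (s : S) (T : Set S) : (dirac s).prob T = if s ∈ T then 1 else 0 := by
  rw [prob, Finset.sum_eq_single s (fun t _ ht => by simp [dirac, ht]) (by simp)]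
  simp [dirac]

lemma mem_supp_dirac {s t : S} : t ∈ (dirac s).supp ↔ t = s := by
  simp only [supp, dirac, Set.mem_ofPred_eq]
  split_ifs <;> simp_all

noncomputable def avg (μ ν : FDist S) : FDist S where
  pmf s := (μ.pmf s + ν.pmf s) / 2
  nonneg s := by have := μ.nonneg s; have := ν.nonneg s; positivity
  sum_one := by rw [← Finset.sum_div, Finset.sum_add_distrib, μ.sum_one, ν.sum_one]; norm_num

@[simp]
lemma prob_avg (μ ν : FDist S) (T : Set S) : (avg μ ν).prob T = (μ.prob T + ν.prob T) / 2 := by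
  simp only [prob, avg, ← Finset.sum_add_distrib, Finset.sum_div]
  exact Finset.sum_congr rfl fun s _ => by split_ifs <;> simp

lemma mem_supp_avg_dirac {s t u : S} : u ∈ (avg (dirac s) (dirac t)).supp ↔ u = s ∨ u = t := by
  simp only [supp, avg, dirac, Set.mem_ofPred_eq]
  split_ifs <;> simp_all

end FDist

open FDist

section Lifting

variable {S1 S2 : Type} [Fintype S1] [Fintype S2] {Q Q' : Set (S1 × S2)}

lemma liftRel.exists_mem_supp {μ : FDist S1} {ν : FDist S2} (h : liftRel Q μ ν) {s : S1}
    (hs : s ∈ μ.supp) : ∃ t ∈ ν.supp, (s, t) ∈ Q := by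
  by_contra! hQ
  have hle := h {s} (Set.singleton_subset_iff.mpr hs)
  have hzero : ν.prob (relImage Q {s}) = 0 := by
    refine Finset.sum_eq_zero fun t _ => ?_
    split_ifs with ht
    · obtain ⟨_, rfl, hst⟩ := ht
      exact le_antisymm (not_lt.mp fun hpos => hQ t hpos hst) (ν.nonneg t)
    · rfl
  rw [prob_singleton, hzero] at hle
  exact absurd hs (not_lt.mpr hle)

lemma liftRel_dirac_iff {μ : FDist S1} {t : S2} :
    liftRel Q μ (dirac t) ↔ ∀ s ∈ μ.supp, (s, t) ∈ Q := by
  refine ⟨fun h s hs => ?_, fun h T hT => ?_⟩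
  · obtain ⟨t', ht', hst'⟩ := h.exists_mem_supp hs
    rwa [mem_supp_dirac.mp ht'] at hst'
  · rcases T.eq_empty_or_nonempty with rfl | ⟨s, hs⟩
    · exact (prob_empty μ).trans_le (prob_nonneg _ _)
    · have ht : t ∈ relImage Q T := ⟨s, hs, h s (hT hs)⟩
      simpa [ht] using prob_le_one μ T

lemma liftRel_avg_dirac_of_cover {μ : FDist S1} {t₁ t₂ : S2}
    (h : liftRel Q μ (avg (dirac t₁) (dirac t₂)))
    (hcover : ∀ s ∈ μ.supp, (s, t₁) ∈ Q' ∨ (s, t₂) ∈ Q')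
    (hboth : ∀ s ∈ μ.supp, (s, t₂) ∈ Q → (s, t₁) ∈ Q' ∧ (s, t₂) ∈ Q') :
    liftRel Q' μ (avg (dirac t₁) (dirac t₂)) := by
  intro T hT
  rcases T.eq_empty_or_nonempty with rfl | ⟨s, hs⟩
  · exact (prob_empty μ).trans_le (prob_nonneg _ _)
  by_cases h₂ : t₂ ∈ relImage Q T
  · obtain ⟨s', hs', hQs'⟩ := h₂
    obtain ⟨h₁', h₂'⟩ := hboth s' (hT hs') hQs'
    have : t₁ ∈ relImage Q' T ∧ t₂ ∈ relImage Q' T := ⟨⟨s', hs', h₁'⟩, ⟨s', hs', h₂'⟩⟩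
    simpa [this] using prob_le_one μ T
  · -- `μ T ≤ 1/2` because the `Q`-image of `T` misses `t₂`
    have hle := h T hT
    have hcov : t₁ ∈ relImage Q' T ∨ t₂ ∈ relImage Q' T :=
      (hcover s (hT hs)).imp (fun h => ⟨s, hs, h⟩) (fun h => ⟨s, hs, h⟩)
    simp only [prob_avg, prob_dirac, if_neg h₂] at hle ⊢
    split_ifs at hle ⊢ <;> simp_all <;> linarith

end Lifting

lemma StrongSim.trans_eq_empty {S1 S2 Act : Type} [Fintype S1] [Fintype S2]
    {L1 : LPTS S1 Act} {L2 : LPTS S2 Act} {Q : Set (S1 × S2)} (hQ : StrongSim L1 L2 Q)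
    {s1 : S1} {s2 : S2} (hs : (s1, s2) ∈ Q) {a : Act} (h2 : L2.trans s2 a = ∅) :
    L1.trans s1 a = ∅ :=
  Set.eq_empty_of_forall_notMem fun μ hμ => by
    obtain ⟨ν, hν, -⟩ := hQ s1 s2 hs a μ hμ
    simp [h2] at hν

lemma Set.Subsingleton.forall_or {α : Type*} {s : Set α} (hs : s.Subsingleton)
    {p q : α → Prop} (h : ∀ x ∈ s, p x ∨ q x) : (∀ x ∈ s, p x) ∨ ∀ x ∈ s, q x := by
  rcases hs.eq_empty_or_singleton with rfl | ⟨x, rfl⟩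
  · simp
  · simpa using h x rfl

/-! Actions `0, 1, 2, 3` are `x, y, z, w`. In `Lsys` the state `1` chooses between a `y`-step to
the `z`-state `3` and one to the `w`-state `4`, and `2` is a leaf; `Rsys` splits this choice
between its states `1` and `2`. -/

noncomputable def coin : FDist (Fin 5) := avg (dirac 1) (dirac 2)

def Ltrans (s : Fin 5) (a : Fin 4) : Set (FDist (Fin 5)) :=
  {μ | (s = 0 ∧ a = 0 ∧ μ = coin) ∨ (s = 1 ∧ a = 1 ∧ (μ = dirac 3 ∨ μ = dirac 4))
    ∨ (s = 3 ∧ a = 2 ∧ μ = dirac 3) ∨ (s = 4 ∧ a = 3 ∧ μ = dirac 4)}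

def Rtrans (s : Fin 5) (a : Fin 4) : Set (FDist (Fin 5)) :=
  {μ | (s = 0 ∧ a = 0 ∧ μ = coin) ∨ (s = 1 ∧ a = 1 ∧ μ = dirac 3) ∨ (s = 2 ∧ a = 1 ∧ μ = dirac 4)
    ∨ (s = 3 ∧ a = 2 ∧ μ = dirac 3) ∨ (s = 4 ∧ a = 3 ∧ μ = dirac 4)}

noncomputable def Lsys : LPTS (Fin 5) (Fin 4) where
  start := 0
  alpha := Set.univ
  trans := Ltrans
  trans_mem _ a _ _ := Set.mem_univ a
  finite_trans s a := (Set.toFinite {coin, dirac 3, dirac 4}).subset fun μ hμ => by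
    rcases hμ with ⟨-, -, rfl⟩ | ⟨-, -, rfl | rfl⟩ | ⟨-, -, rfl⟩ | ⟨-, -, rfl⟩ <;> simp

noncomputable def Rsys : LPTS (Fin 5) (Fin 4) where
  start := 0
  alpha := Set.univ
  trans := Rtrans
  trans_mem _ a _ _ := Set.mem_univ a
  finite_trans s a := (Set.toFinite {coin, dirac 3, dirac 4}).subset fun μ hμ => by
    rcases hμ with ⟨-, -, rfl⟩ | ⟨-, -, rfl⟩ | ⟨-, -, rfl⟩ | ⟨-, -, rfl⟩ | ⟨-, -, rfl⟩ <;> simp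

lemma Rsys_reactive : Reactive Rsys := by
  rintro s a μ hμ ν (hν : ν ∈ Rtrans s a)
  rcases hμ with ⟨rfl, rfl, rfl⟩ | ⟨rfl, rfl, rfl⟩ | ⟨rfl, rfl, rfl⟩ | ⟨rfl, rfl, rfl⟩ |
    ⟨rfl, rfl, rfl⟩ <;> simpa [Rtrans, eq_comm] using hν

lemma not_sim_Lsys_Rsys : ¬ Sim Lsys Rsys := by
  rintro ⟨Q, hQ, h00⟩
  have h43 : ((4 : Fin 5), (3 : Fin 5)) ∉ Q := fun h => by
    simpa [Lsys, Ltrans] using hQ.trans_eq_empty h (a := 3) (by ext; simp [Rsys, Rtrans])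
  have h34 : ((3 : Fin 5), (4 : Fin 5)) ∉ Q := fun h => by
    simpa [Lsys, Ltrans] using hQ.trans_eq_empty h (a := 2) (by ext; simp [Rsys, Rtrans])
  have h11 : ((1 : Fin 5), (1 : Fin 5)) ∉ Q := fun h => by
    obtain ⟨μ, hμ, hlift⟩ := hQ 1 1 h 1 (dirac 4) (by simp [Lsys, Ltrans])
    obtain rfl : μ = dirac 3 := by simpa [Rsys, Rtrans] using hμ
    exact h43 (liftRel_dirac_iff.mp hlift 4 (mem_supp_dirac.mpr rfl))
  have h12 : ((1 : Fin 5), (2 : Fin 5)) ∉ Q := fun h => by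
    obtain ⟨μ, hμ, hlift⟩ := hQ 1 2 h 1 (dirac 3) (by simp [Lsys, Ltrans])
    obtain rfl : μ = dirac 4 := by simpa [Rsys, Rtrans] using hμ
    exact h34 (liftRel_dirac_iff.mp hlift 3 (mem_supp_dirac.mpr rfl))
  obtain ⟨μ, hμ, hlift⟩ := hQ 0 0 h00 0 coin (by simp [Lsys, Ltrans])
  obtain rfl : μ = coin := by simpa [Rsys, Rtrans] using hμ
  obtain ⟨t, ht, h1t⟩ := hlift.exists_mem_supp (mem_supp_avg_dirac.mpr (Or.inl rfl))
  rcases mem_supp_avg_dirac.mp ht with rfl | rfl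
  exacts [h11 h1t, h12 h1t]

section Reactive

variable {T : Type} [Fintype T] {C : LPTS T (Fin 4)} {Q : Set (T × Fin 5)}

def simRel (C : LPTS T (Fin 4)) (Q : Set (T × Fin 5)) : Set (T × Fin 5) :=
  {p | (∀ a, C.trans p.1 a = ∅) ∨ (p ∈ Q ∧ (p.2 = 0 ∨ p.2 = 3 ∨ p.2 = 4))
    ∨ (p.2 = 1 ∧ (p.1, 1) ∈ Q ∧ ∀ γ ∈ C.trans p.1 1, liftRel Q γ (dirac 3))
    ∨ (p.2 = 2 ∧ (p.1, 1) ∈ Q ∧ ∀ γ ∈ C.trans p.1 1, liftRel Q γ (dirac 4))}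

lemma trans_eq_empty_of_sim_leaf (hQ : StrongSim C Lsys Q) {c : T} (hc : (c, 2) ∈ Q) (a : Fin 4) :
    C.trans c a = ∅ :=
  hQ.trans_eq_empty hc (by ext; simp [Lsys, Ltrans])

lemma mem_simRel_one_or_two (hC : Reactive C) (hQ : StrongSim C Lsys Q) {c : T}
    (hc : (c, 1) ∈ Q) : (c, 1) ∈ simRel C Q ∨ (c, 2) ∈ simRel C Q := by
  have hchoice : ∀ γ ∈ C.trans c 1, liftRel Q γ (dirac 3) ∨ liftRel Q γ (dirac 4) := by
    intro γ hγ
    obtain ⟨μ, hμ, hlift⟩ := hQ c 1 hc 1 γ hγ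
    obtain rfl | rfl : μ = dirac 3 ∨ μ = dirac 4 := by simpa [Lsys, Ltrans] using hμ
    exacts [Or.inl hlift, Or.inr hlift]
  rcases (hC c 1).forall_or hchoice with h3 | h4
  · exact Or.inl (Or.inr (Or.inr (Or.inl ⟨rfl, hc, h3⟩)))
  · exact Or.inr (Or.inr (Or.inr (Or.inr ⟨rfl, hc, h4⟩)))

lemma exists_Rtrans_start (hC : Reactive C) (hQ : StrongSim C Lsys Q) {c : T} (hc : (c, 0) ∈ Q)
    {a : Fin 4} {γ : FDist T} (hγ : γ ∈ C.trans c a) :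
    ∃ μ ∈ Rsys.trans 0 a, liftRel (simRel C Q) γ μ := by
  obtain ⟨μ, hμ, hlift⟩ := hQ c 0 hc a γ hγ
  obtain ⟨rfl, rfl⟩ : a = 0 ∧ μ = coin := by simpa [Lsys, Ltrans] using hμ
  have hleaf {c'} (h2 : (c', 2) ∈ Q) : ∀ a, C.trans c' a = ∅ := trans_eq_empty_of_sim_leaf hQ h2
  refine ⟨coin, by simp [Rsys, Rtrans], liftRel_avg_dirac_of_cover hlift (fun c' hc' => ?_)
    fun c' _ h2 => ⟨Or.inl (hleaf h2), Or.inl (hleaf h2)⟩⟩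
  obtain ⟨t, ht, hc't⟩ := hlift.exists_mem_supp hc'
  rcases mem_supp_avg_dirac.mp ht with rfl | rfl
  · exact mem_simRel_one_or_two hC hQ hc't
  · exact Or.inl (Or.inl (hleaf hc't))

lemma liftRel_dirac_simRel {γ : FDist T} {t : Fin 5} (h : liftRel Q γ (dirac t))
    (ht : t = 3 ∨ t = 4) : liftRel (simRel C Q) γ (dirac t) :=
  liftRel_dirac_iff.mpr fun c hc => Or.inr (Or.inl ⟨liftRel_dirac_iff.mp h c hc, Or.inr ht⟩)

lemma strongSim_simRel (hC : Reactive C) (hQ : StrongSim C Lsys Q) :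
    StrongSim C Rsys (simRel C Q) := by
  rintro c r (hdead | ⟨hcr, rfl | hr⟩ | ⟨rfl, hc1, hz⟩ | ⟨rfl, hc1, hw⟩) a γ hγ
  · simp [hdead a] at hγ
  · exact exists_Rtrans_start hC hQ hcr hγ
  · obtain ⟨μ, hμ, hlift⟩ := hQ c r hcr a γ hγ
    obtain ⟨hμR, rfl⟩ : μ ∈ Rsys.trans r a ∧ μ = dirac r := by
      rcases hr with rfl | rfl <;> simpa [Lsys, Ltrans, Rsys, Rtrans] using hμ
    exact ⟨_, hμR, liftRel_dirac_simRel hlift hr⟩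
  all_goals
    obtain ⟨μ, hμ, -⟩ := hQ c 1 hc1 a γ hγ
    obtain ⟨rfl, -⟩ : a = 1 ∧ _ := by simpa [Lsys, Ltrans] using hμ
  · exact ⟨dirac 3, by simp [Rsys, Rtrans], liftRel_dirac_simRel (hz γ hγ) (.inl rfl)⟩
  · exact ⟨dirac 4, by simp [Rsys, Rtrans], liftRel_dirac_simRel (hw γ hγ) (.inr rfl)⟩

theorem sim_Rsys_of_sim_Lsys (hC : Reactive C) (h : Sim C Lsys) : Sim C Rsys :=
  let ⟨Q, hQ, hstart⟩ := h
  ⟨simRel C Q, strongSim_simRel hC hQ, Or.inr (Or.inl ⟨hstart, Or.inl rfl⟩)⟩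

end Reactive

/-- There are a finite LPTS `L` and a finite reactive LPTS `R` with `L ⋠ R`
admitting no reactive counterexample: every reactive `C` with `C ≼ L` also has
`C ≼ R`. -/
theorem no_reactive_counterexample :
    ∃ (Act T1 T2 : Type) (i1 : Fintype T1) (i2 : Fintype T2)
      (L : @LPTS T1 Act i1) (R : @LPTS T2 Act i2),
      @Reactive T2 Act i2 R ∧
      ¬ @Sim T1 T2 Act i1 i2 L R ∧
      ∀ (T : Type) (i : Fintype T) (C : @LPTS T Act i),
        @Reactive T Act i C →
        @Sim T T1 Act i i1 C L → @Sim T T2 Act i i2 C R :=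
  ⟨Fin 4, Fin 5, Fin 5, inferInstance, inferInstance, Lsys, Rsys, Rsys_reactive, not_sim_Lsys_Rsys,
    fun _ _ _ => sim_Rsys_of_sim_Lsys⟩
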